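/- arXiv:1204.0072 — 13 statements merged into one kernel-verified Lean document; each statement's English description precedes it below -/
import Mathlib

section
/- Let 𝒞 be a fuzzy covering of a finite nonempty set U and let x, y ∈ U. If C_x(y) > 0, then C_y ⊆ C_x (i.e., C_y(z) ≤ C_x(z) for all z ∈ U). -/
instance : Fact ((0:ℝ) ≤ 1) := ⟨zero_le_one⟩

noncomputable section

/-- A fuzzy covering of `U`: a finite nonempty collection of fuzzy sets (maps `U → [0,1]`)
such that every member is non-null and every point has positive membership in some member. -/
def IsFuzzyCovering {U : Type*} (𝒞 : Set (U → unitInterval)) : Prop :=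
  𝒞.Finite ∧ 𝒞.Nonempty ∧ (∀ C ∈ 𝒞, ∃ x, 0 < C x) ∧ (∀ x, ∃ C ∈ 𝒞, 0 < C x)

/-- The neighborhood of `x`: pointwise infimum of all members with positive value at `x`. -/
def nbhd {U : Type*} (𝒞 : Set (U → unitInterval)) (x : U) : U → unitInterval :=
  ⨅ C ∈ {C ∈ 𝒞 | 0 < C x}, C

/-- If `C_x(y) > 0`, then `C_y ⊆ C_x`. -/
theorem nbhd_le_of_pos {U : Type*} [Fintype U] [Nonempty U]
    (𝒞 : Set (U → unitInterval)) (h𝒞 : IsFuzzyCovering 𝒞)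
    (x y : U) (h : 0 < nbhd 𝒞 x y) :
    nbhd 𝒞 y ≤ nbhd 𝒞 x := by
  have hsub : {C ∈ 𝒞 | 0 < C x} ⊆ {C ∈ 𝒞 | 0 < C y} := by
    rintro C ⟨hC, hCx⟩
    refine ⟨hC, lt_of_lt_of_le h ?_⟩
    have h1 : nbhd 𝒞 x ≤ C := iInf₂_le C ⟨hC, hCx⟩
    exact h1 y
  exact biInf_mono hsub

end
end

section
/- Let 𝒞 be a fuzzy covering of a finite nonempty set U. For every fuzzy set X of U, ⋃{C_x : x ∈ U, X(x) > 0} ⊆ upper_𝒞(X). -/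
noncomputable section

/-- The lower approximation of `X`: union of all members contained in `X`. -/
def lowerApprox {U : Type*} (𝒞 : Set (U → unitInterval)) (X : U → unitInterval) :
    U → unitInterval :=
  ⨆ C ∈ {C ∈ 𝒞 | C ≤ X}, C

/-- The upper approximation of `X`. -/
def upperApprox {U : Type*} (𝒞 : Set (U → unitInterval)) (X : U → unitInterval) :
    U → unitInterval :=
  (⨆ x ∈ {x | 0 < X x ∧ lowerApprox 𝒞 X x = 0}, nbhd 𝒞 x) ⊔ lowerApprox 𝒞 X

/-- The union of the neighborhoods of points with positive membership in `X` is contained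
in the upper approximation of `X`. -/
theorem biSup_nbhd_le_upperApprox {U : Type*} [Fintype U] [Nonempty U]
    (𝒞 : Set (U → unitInterval)) (h𝒞 : IsFuzzyCovering 𝒞)
    (X : U → unitInterval) :
    (⨆ x ∈ {x | 0 < X x}, nbhd 𝒞 x) ≤ upperApprox 𝒞 X := by
  refine iSup₂_le fun x hx => ?_
  by_cases h : lowerApprox 𝒞 X x = 0
  · exact le_sup_of_le_left (le_biSup _ ⟨hx, h⟩)
  · -- lowerApprox 𝒞 X x > 0, so ∃ C ∈ 𝒞, C ≤ X, 0 < C x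
    have hpos : 0 < lowerApprox 𝒞 X x := by
      have := bot_le (a := lowerApprox 𝒞 X x)
      rcases this.lt_or_eq with h' | h'
      · exact h'
      · exact absurd h'.symm h
    obtain ⟨C, hC, hCx⟩ : ∃ C ∈ {C ∈ 𝒞 | C ≤ X}, 0 < C x := by
      by_contra hcon
      push_neg at hcon
      have : lowerApprox 𝒞 X x ≤ 0 := by
        have : lowerApprox 𝒞 X x = ⨆ C ∈ {C ∈ 𝒞 | C ≤ X}, C x := by
          simp [lowerApprox, iSup_apply]
        rw [this]
        exact iSup₂_le fun C hC => le_of_not_gt fun hlt => absurd hlt (not_lt.mpr (hcon C hC))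
      exact absurd (this.trans_lt hpos) (lt_irrefl _)
    have h1 : nbhd 𝒞 x ≤ C := biInf_le (f := fun C : U → unitInterval => C) ⟨hC.1, hCx⟩
    have h2 : C ≤ lowerApprox 𝒞 X := le_biSup (f := fun C : U → unitInterval => C) hC
    exact le_sup_of_le_right (h1.trans h2)

end
end

section
/- Let 𝒞1 and 𝒞2 be fuzzy coverings of a finite nonempty set U. Then lower_{𝒞1}(C) = lower_{𝒞2}(C) holds for every C ∈ 𝒞1 ∪ 𝒞2 if and only if lower_{𝒞1}(X) = lower_{𝒞2}(X) for every fuzzy set X of U. -/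
noncomputable section

lemma le_lowerApprox {U : Type*} {𝒞 : Set (U → unitInterval)} {X C : U → unitInterval}
    (hC : C ∈ 𝒞) (hCX : C ≤ X) : C ≤ lowerApprox 𝒞 X := by
  exact le_biSup (fun C => C) (show C ∈ {C ∈ 𝒞 | C ≤ X} from ⟨hC, hCX⟩)

lemma lowerApprox_mono {U : Type*} (𝒞 : Set (U → unitInterval)) {X Y : U → unitInterval}
    (h : X ≤ Y) : lowerApprox 𝒞 X ≤ lowerApprox 𝒞 Y := by
  refine iSup₂_le fun C hC => le_lowerApprox hC.1 (hC.2.trans h)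

lemma lowerApprox_le_of_eq {U : Type*} {𝒞₁ 𝒞₂ : Set (U → unitInterval)}
    (h : ∀ C ∈ 𝒞₁, lowerApprox 𝒞₁ C = lowerApprox 𝒞₂ C) (X : U → unitInterval) :
    lowerApprox 𝒞₁ X ≤ lowerApprox 𝒞₂ X := by
  refine iSup₂_le fun C hC => ?_
  calc C ≤ lowerApprox 𝒞₁ C := le_lowerApprox hC.1 le_rfl
    _ = lowerApprox 𝒞₂ C := h C hC.1
    _ ≤ lowerApprox 𝒞₂ X := lowerApprox_mono 𝒞₂ hC.2

/-- Two fuzzy coverings give the same lower approximations on all fuzzy sets iff they give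
the same lower approximations on each of their members. -/
theorem lowerApprox_eq_iff_forall_mem {U : Type*} [Fintype U] [Nonempty U]
    (𝒞₁ 𝒞₂ : Set (U → unitInterval))
    (h₁ : IsFuzzyCovering 𝒞₁) (h₂ : IsFuzzyCovering 𝒞₂) :
    (∀ C ∈ 𝒞₁ ∪ 𝒞₂, lowerApprox 𝒞₁ C = lowerApprox 𝒞₂ C) ↔
      (∀ X : U → unitInterval, lowerApprox 𝒞₁ X = lowerApprox 𝒞₂ X) := by
  constructor
  · intro h X
    exact le_antisymm
      (lowerApprox_le_of_eq (fun C hC => h C (Or.inl hC)) X)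
      (lowerApprox_le_of_eq (fun C hC => (h C (Or.inr hC)).symm) X)
  · intro h C _
    exact h C

end
end

section
/- Let 𝒞 be a fuzzy covering of a finite nonempty set U. For every fuzzy set X of U, upper_𝒞(X) ⊆ ⋂{⋃{C : C ∈ 𝒞'} : 𝒞' ∈ FC(X)}. -/
noncomputable section

/-- The set of fuzzy subcoverings of `X`: subsets of `𝒞` whose union contains `X`. -/
def FC {U : Type*} (𝒞 : Set (U → unitInterval)) (X : U → unitInterval) :
    Set (Set (U → unitInterval)) :=
  {𝒞' | 𝒞' ⊆ 𝒞 ∧ X ≤ ⨆ C ∈ 𝒞', C}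

/-- The upper approximation of `X` is contained in the intersection of the unions of
all fuzzy subcoverings of `X`. -/
theorem upperApprox_le_iInf_FC {U : Type*} [Fintype U] [Nonempty U]
    (𝒞 : Set (U → unitInterval)) (h𝒞 : IsFuzzyCovering 𝒞)
    (X : U → unitInterval) :
    upperApprox 𝒞 X ≤ ⨅ 𝒞' ∈ FC 𝒞 X, ⨆ C ∈ 𝒞', C := by
  rw [le_iInf₂_iff]
  intro 𝒞' h𝒞'
  obtain ⟨hsub, hX⟩ := h𝒞'
  apply sup_le
  · apply iSup₂_le
    intro x hx
    obtain ⟨hx0, _⟩ := hx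
    have hpos : 0 < (⨆ C ∈ 𝒞', C) x := lt_of_lt_of_le hx0 (hX x)
    have h2 : ∃ C ∈ 𝒞', 0 < C x := by
      by_contra h
      push_neg at h
      have hle : (⨆ C ∈ 𝒞', C) x ≤ 0 := by
        simp only [iSup_apply]
        exact iSup₂_le fun C hC => h C hC
      exact absurd hpos (not_lt.mpr hle)
    obtain ⟨C, hC𝒞', hCx⟩ := h2
    calc nbhd 𝒞 x ≤ C := biInf_le _ ⟨hsub hC𝒞', hCx⟩
    _ ≤ ⨆ C ∈ 𝒞', C := le_iSup₂ (f := fun C _ => C) C hC𝒞'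
  · exact le_trans (iSup₂_le fun C hC => hC.2) hX

end
end

section
/- Let 𝒞 be a fuzzy covering of a finite nonempty set U, let C be a reducible element of 𝒞, and let C₀ ∈ 𝒞 \ {C}. Then C₀ is a reducible element of 𝒞 if and only if C₀ is a reducible element of 𝒞 \ {C}. -/
noncomputable section

/-- `C` is a reducible element of `𝒞` if it is the union (pointwise supremum) of some
nonempty subfamily of `𝒞 \ {C}`. -/
def Reducible {U : Type*} (𝒞 : Set (U → unitInterval)) (C : U → unitInterval) : Prop :=
  ∃ S : Set (U → unitInterval), S ⊆ 𝒞 \ {C} ∧ S.Nonempty ∧ C = ⨆ D ∈ S, D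

/-- If `C` is reducible in `𝒞` and `C₀ ∈ 𝒞 \ {C}`, then `C₀` is reducible in `𝒞` iff
it is reducible in `𝒞 \ {C}`. -/
theorem reducible_iff_reducible_diff {U : Type*} [Fintype U] [Nonempty U]
    (𝒞 : Set (U → unitInterval)) (h𝒞 : IsFuzzyCovering 𝒞)
    (C : U → unitInterval) (hC : C ∈ 𝒞) (hred : Reducible 𝒞 C)
    (C₀ : U → unitInterval) (hC₀ : C₀ ∈ 𝒞 \ {C}) :
    Reducible 𝒞 C₀ ↔ Reducible (𝒞 \ {C}) C₀ := by
  constructor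
  · rintro ⟨S, hS, hSne, hSsup⟩
    obtain ⟨T, hT, hTne, hTsup⟩ := hred
    by_cases hCS : C ∈ S
    · have hCle : C ≤ C₀ := hSsup ▸ le_biSup (fun D => D) hCS
      refine ⟨(S \ {C}) ∪ T, ?_, ?_, ?_⟩
      · rintro D (⟨hDS, hDC⟩ | hDT)
        · exact ⟨⟨(hS hDS).1, hDC⟩, (hS hDS).2⟩
        · refine ⟨⟨(hT hDT).1, (hT hDT).2⟩, fun hD : D = C₀ => ?_⟩
          have h1 : C₀ ≤ C := hTsup ▸ hD ▸ le_biSup (fun D => D) hDT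
          exact hC₀.2 (le_antisymm h1 hCle)
      · exact hTne.elim fun D hD => ⟨D, Or.inr hD⟩
      · refine le_antisymm ?_ ?_
        · rw [hSsup]
          refine iSup₂_le fun D hD => ?_
          by_cases hDC : D = C
          · subst hDC
            rw [hTsup]
            exact iSup₂_le fun E hE => le_biSup (fun D => D) (Or.inr hE)
          · exact le_biSup (fun D => D) (Or.inl ⟨hD, hDC⟩)
        · refine iSup₂_le fun D hD => ?_
          rcases hD with ⟨hDS, _⟩ | hDT
          · exact hSsup ▸ le_biSup (fun D => D) hDS
          · exact le_trans (hTsup ▸ le_biSup (fun D => D) hDT) hCle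
    · exact ⟨S, fun D hD => ⟨⟨(hS hD).1, fun h : D = C => hCS (h ▸ hD)⟩, (hS hD).2⟩,
        hSne, hSsup⟩
  · rintro ⟨S, hS, hSne, hSsup⟩
    exact ⟨S, fun D hD => ⟨(hS hD).1.1, (hS hD).2⟩, hSne, hSsup⟩

end
end

section
/- Let 𝒞 be a fuzzy covering of a finite nonempty set U and let C be a reducible element of 𝒞. Then lower_𝒞(X) = lower_{𝒞\{C}}(X) for every fuzzy set X of U. -/
noncomputable section

/-- Deleting a reducible element does not change lower approximations. -/
theorem lowerApprox_diff_reducible {U : Type*} [Fintype U] [Nonempty U]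
    (𝒞 : Set (U → unitInterval)) (h𝒞 : IsFuzzyCovering 𝒞)
    (C : U → unitInterval) (hC : C ∈ 𝒞) (hred : Reducible 𝒞 C) :
    ∀ X : U → unitInterval, lowerApprox 𝒞 X = lowerApprox (𝒞 \ {C}) X := by
  intro X
  obtain ⟨S, hS, hSne, hCeq⟩ := hred
  apply le_antisymm
  · apply iSup₂_le
    rintro D ⟨hD𝒞, hDX⟩
    by_cases hDC : D = C
    · rw [hDC] at hDX
      rw [hDC]
      refine le_trans (le_of_eq hCeq) ?_
      apply iSup₂_le
      intro E hE
      have hEC : E ≤ C := hCeq ▸ le_iSup₂ (f := fun D _ => D) E hE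
      exact le_iSup₂ (f := fun D (_ : D ∈ {D ∈ 𝒞 \ {C} | D ≤ X}) => D) E
        ⟨hS hE, hEC.trans hDX⟩
    · exact le_iSup₂ (f := fun D (_ : D ∈ {D ∈ 𝒞 \ {C} | D ≤ X}) => D) D
        ⟨⟨hD𝒞, hDC⟩, hDX⟩
  · apply iSup₂_le
    rintro D ⟨⟨hD𝒞, _⟩, hDX⟩
    exact le_iSup₂ (f := fun D (_ : D ∈ {D ∈ 𝒞 | D ≤ X}) => D) D ⟨hD𝒞, hDX⟩

end
end

section
/- Let 𝒞 be a fuzzy covering of a finite nonempty set U and let C be a reducible element of 𝒞. Then upper_𝒞(X) = upper_{𝒞\{C}}(X) for every fuzzy set X of U. -/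
noncomputable section

/-- Deleting a reducible element does not change upper approximations. -/
theorem upperApprox_diff_reducible {U : Type*} [Fintype U] [Nonempty U]
    (𝒞 : Set (U → unitInterval)) (h𝒞 : IsFuzzyCovering 𝒞)
    (C : U → unitInterval) (hC : C ∈ 𝒞) (hred : Reducible 𝒞 C) :
    ∀ X : U → unitInterval, upperApprox 𝒞 X = upperApprox (𝒞 \ {C}) X := by
  obtain ⟨S, hS, hSne, hCeq⟩ := hred
  have hle : ∀ E ∈ S, E ≤ C := by
    intro E hE
    rw [hCeq]
    exact le_iSup₂ (f := fun (D : U → unitInterval) (_ : D ∈ S) => D) E hE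
  have hnbhd : ∀ x, nbhd 𝒞 x = nbhd (𝒞 \ {C}) x := by
    intro x
    apply le_antisymm
    · apply le_iInf₂
      intro D hD
      exact iInf₂_le D ⟨hD.1.1, hD.2⟩
    · apply le_iInf₂
      intro D hD
      by_cases hDC : D = C
      · subst hDC
        have hx : 0 < (⨆ E ∈ S, E) x := by rw [← hCeq]; exact hD.2
        have hex : ∃ E ∈ S, 0 < E x := by
          by_contra h
          push_neg at h
          have hle0 : (⨆ E ∈ S, E) x ≤ 0 := by
            rw [iSup_apply]
            apply iSup_le
            intro E
            rw [iSup_apply]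
            apply iSup_le
            intro hE
            exact h E hE
          exact absurd (lt_of_lt_of_le hx hle0) (lt_irrefl 0)
        obtain ⟨E, hES, hEx⟩ := hex
        calc nbhd (𝒞 \ {D}) x ≤ E := iInf₂_le E ⟨hS hES, hEx⟩
          _ ≤ D := hle E hES
      · exact iInf₂_le D ⟨⟨hD.1, hDC⟩, hD.2⟩
  intro X
  have hlow : lowerApprox 𝒞 X = lowerApprox (𝒞 \ {C}) X := by
    apply le_antisymm
    · apply iSup₂_le
      intro D hD
      by_cases hDC : D = C
      · subst hDC
        refine hCeq.le.trans ?_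
        apply iSup₂_le
        intro E hE
        exact le_iSup₂ (f := fun (F : U → unitInterval) (_ : F ∈ {F ∈ 𝒞 \ {D} | F ≤ X}) => F)
          E ⟨hS hE, le_trans (hle E hE) hD.2⟩
      · exact le_iSup₂ (f := fun (D : U → unitInterval) (_ : D ∈ {D ∈ 𝒞 \ {C} | D ≤ X}) => D)
          D ⟨⟨hD.1, hDC⟩, hD.2⟩
    · apply iSup₂_le
      intro D hD
      exact le_iSup₂ (f := fun (D : U → unitInterval) (_ : D ∈ {D ∈ 𝒞 | D ≤ X}) => D)
        D ⟨hD.1.1, hD.2⟩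
  simp only [upperApprox, hlow, hnbhd]

end
end

section
/- Let 𝒞1 and 𝒞2 be irreducible fuzzy coverings of a finite nonempty set U. If lower_{𝒞1}(X) = lower_{𝒞2}(X) for every fuzzy set X of U, then 𝒞1 = 𝒞2. -/
noncomputable section

lemma lowerApprox_self {U : Type*} {𝒞 : Set (U → unitInterval)} {C : U → unitInterval}
    (hC : C ∈ 𝒞) : lowerApprox 𝒞 C = C :=
  le_antisymm (iSup₂_le fun _ hD => hD.2)
    (le_iSup₂ (f := fun D (_ : D ∈ {C' ∈ 𝒞 | C' ≤ C}) => D) C ⟨hC, le_rfl⟩)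

lemma subset_aux {U : Type*} (𝒞₁ 𝒞₂ : Set (U → unitInterval))
    (h₁ : IsFuzzyCovering 𝒞₁)
    (hirr₁ : ∀ C ∈ 𝒞₁, ¬ Reducible 𝒞₁ C)
    (h : ∀ X : U → unitInterval, lowerApprox 𝒞₁ X = lowerApprox 𝒞₂ X) : 𝒞₁ ⊆ 𝒞₂ := by
  intro C hC
  set S := {D ∈ 𝒞₂ | D ≤ C} with hS
  have hCS : C = ⨆ D ∈ S, D := by
    have := (lowerApprox_self hC).symm.trans (h C)
    simpa [lowerApprox, hS] using this
  set T := {E ∈ 𝒞₁ | ∃ D ∈ S, E ≤ D} with hT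
  have hTC : (⨆ E ∈ T, E) = C := by
    apply le_antisymm
    · refine iSup₂_le fun E hE => ?_
      obtain ⟨_, D, hD, hED⟩ := hE
      exact hED.trans hD.2
    · rw [hCS]
      refine iSup₂_le fun D hD => ?_
      have hD1 : lowerApprox 𝒞₁ D = D := (h D).trans (lowerApprox_self hD.1)
      rw [← hD1]
      refine iSup₂_le fun E hE => ?_
      exact le_iSup₂ (f := fun E (_ : E ∈ T) => E) E ⟨hE.1, D, hD, hE.2⟩
  have hCT : C ∈ T := by
    by_contra hnot
    obtain ⟨x, hx⟩ := h₁.2.2.1 C hC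
    have hTne : T.Nonempty := by
      by_contra he
      rw [Set.not_nonempty_iff_eq_empty] at he
      rw [he] at hTC
      simp only [Set.mem_empty_iff_false, iSup_false, iSup_bot] at hTC
      have : C x = ⊥ := by rw [← hTC]; rfl
      rw [this] at hx
      exact absurd hx (by simp [bot_lt_iff_ne_bot])
    refine hirr₁ C hC ⟨T, fun E hE => ⟨hE.1, fun hEC => hnot ?_⟩, hTne, hTC.symm⟩
    simp only [Set.mem_singleton_iff] at hEC
    exact hEC ▸ hE
  obtain ⟨_, D, hD, hCD⟩ := hCT
  have hDC : D = C := le_antisymm hD.2 hCD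
  exact hDC ▸ hD.1

/-- Two irreducible fuzzy coverings with the same lower approximations are equal. -/
theorem eq_of_irreducible_of_lowerApprox_eq {U : Type*} [Fintype U] [Nonempty U]
    (𝒞₁ 𝒞₂ : Set (U → unitInterval))
    (h₁ : IsFuzzyCovering 𝒞₁) (h₂ : IsFuzzyCovering 𝒞₂)
    (hirr₁ : ∀ C ∈ 𝒞₁, ¬ Reducible 𝒞₁ C) (hirr₂ : ∀ C ∈ 𝒞₂, ¬ Reducible 𝒞₂ C)
    (h : ∀ X : U → unitInterval, lowerApprox 𝒞₁ X = lowerApprox 𝒞₂ X) :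
    𝒞₁ = 𝒞₂ :=
  Set.Subset.antisymm (subset_aux 𝒞₁ 𝒞₂ h₁ hirr₁ h)
    (subset_aux 𝒞₂ 𝒞₁ h₂ hirr₂ fun X => (h X).symm)

end
end

section
/- Let 𝒞 be a fuzzy covering of a finite nonempty set U and let C be a reducible element of 𝒞. Then for every x ∈ U, the neighborhood of x in the fuzzy covering 𝒞 \ {C} equals the neighborhood of x in 𝒞. -/
noncomputable section

lemma biInf_le_mem {U : Type*} {s : Set (U → unitInterval)} {D : U → unitInterval}
    (h : D ∈ s) : (⨅ C ∈ s, C) ≤ D := iInf₂_le D h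

lemma le_biInf_mem {U : Type*} {s : Set (U → unitInterval)} {A : U → unitInterval}
    (h : ∀ C ∈ s, A ≤ C) : A ≤ ⨅ C ∈ s, C := le_iInf₂ h

/-- Deleting a reducible element does not change neighborhoods. -/
theorem nbhd_diff_reducible {U : Type*} [Fintype U] [Nonempty U]
    (𝒞 : Set (U → unitInterval)) (h𝒞 : IsFuzzyCovering 𝒞)
    (C : U → unitInterval) (hC : C ∈ 𝒞) (hred : Reducible 𝒞 C) :
    ∀ x : U, nbhd (𝒞 \ {C}) x = nbhd 𝒞 x := by
  intro x
  apply le_antisymm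
  · -- remove-side is ≤ full-side: show ≤ each member of 𝒞 positive at x
    simp only [nbhd]
    refine le_biInf_mem fun E hE => ?_
    obtain ⟨hE𝒞, hEx⟩ := hE
    by_cases hEC : E = C
    · subst hEC
      obtain ⟨S, hS, hSne, hsup⟩ := hred
      have hD : ∃ D ∈ S, 0 < D x := by
        by_contra h
        push_neg at h
        have hle : E x ≤ 0 := by
          rw [hsup]
          have heq : (⨆ D ∈ S, D) x = ⨆ D ∈ S, D x := by simp [iSup_apply]
          rw [heq]
          exact iSup₂_le fun D hD => h D hD
        exact absurd hEx (not_lt.mpr hle)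
      obtain ⟨D, hDS, hDx⟩ := hD
      have h1 : (⨅ C ∈ {C ∈ 𝒞 \ {E} | 0 < C x}, C) ≤ D := biInf_le_mem ⟨hS hDS, hDx⟩
      have h2 : D ≤ E := by rw [hsup]; exact le_biSup (fun D : U → unitInterval => D) hDS
      exact le_trans h1 h2
    · exact biInf_le_mem ⟨⟨hE𝒞, hEC⟩, hEx⟩
  · simp only [nbhd]
    refine le_biInf_mem fun E hE => ?_
    obtain ⟨⟨hE𝒞, _⟩, hEx⟩ := hE
    exact biInf_le_mem ⟨hE𝒞, hEx⟩

end
end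

section
/- Let 𝒞 be a fuzzy covering of a finite nonempty set U. Then for every fuzzy set X of U: (1) ⋃{C_x : x ∈ U, X(x) > 0} = ⋃{C'_x : x ∈ U, X(x) > 0}, where C_x and C'_x denote the neighborhoods of x in 𝒞 and in IS(𝒞) respectively; and (2) lower_{IS(𝒞)}(X) ⊆ lower_𝒞(X). -/
noncomputable section

/-- `C` is an intersectional element of `𝒞` if it is the intersection (pointwise infimum)
of some nonempty subfamily of `𝒞 \ {C}`. -/
def Intersectional {U : Type*} (𝒞 : Set (U → unitInterval)) (C : U → unitInterval) : Prop :=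
  ∃ S : Set (U → unitInterval), S ⊆ 𝒞 \ {C} ∧ S.Nonempty ∧ C = ⨅ D ∈ S, D

/-- `IS 𝒞` is the set of non-intersectional elements of `𝒞`. -/
def IS {U : Type*} (𝒞 : Set (U → unitInterval)) : Set (U → unitInterval) :=
  {C ∈ 𝒞 | ¬ Intersectional 𝒞 C}

lemma key_IS {U : Type*} (𝒞 : Set (U → unitInterval)) (hf : 𝒞.Finite) :
    ∀ C ∈ 𝒞, ∃ S : Set (U → unitInterval),
      S.Nonempty ∧ S ⊆ IS 𝒞 ∧ (∀ D ∈ S, C ≤ D) ∧ C = ⨅ D ∈ S, D := by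
  classical
  suffices H : ∀ n : ℕ, ∀ C ∈ 𝒞, (hf.toFinset.filter (fun E => C ≤ E)).card ≤ n →
      ∃ S : Set (U → unitInterval),
        S.Nonempty ∧ S ⊆ IS 𝒞 ∧ (∀ D ∈ S, C ≤ D) ∧ C = ⨅ D ∈ S, D by
    intro C hC
    exact H _ C hC le_rfl
  intro n
  induction n with
  | zero =>
    intro C hC hcard
    exfalso
    have hmem : C ∈ hf.toFinset.filter (fun E => C ≤ E) := by
      simp [hf.mem_toFinset, hC]
    have := Finset.card_pos.mpr ⟨C, hmem⟩
    omega
  | succ n ih =>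
    intro C hC hcard
    by_cases hI : Intersectional 𝒞 C
    · obtain ⟨S, hS, hSne, hCeq⟩ := hI
      have hCle : ∀ D ∈ S, C ≤ D := by
        intro D hD; rw [hCeq]; exact biInf_le _ hD
      have hDcard : ∀ D ∈ S, (hf.toFinset.filter (fun E => D ≤ E)).card ≤ n := by
        intro D hD
        have hDne : D ≠ C := fun h => (hS hD).2 (by simp [h])
        have hsub : hf.toFinset.filter (fun E => D ≤ E) ⊆
            hf.toFinset.filter (fun E => C ≤ E) := by
          intro E hE
          simp only [Finset.mem_filter] at *
          exact ⟨hE.1, (hCle D hD).trans hE.2⟩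
        have hCnot : C ∉ hf.toFinset.filter (fun E => D ≤ E) := by
          simp only [Finset.mem_filter, not_and]
          intro _ hle
          exact hDne (le_antisymm hle (hCle D hD))
        have hCin : C ∈ hf.toFinset.filter (fun E => C ≤ E) := by
          simp [hf.mem_toFinset, hC]
        have := Finset.card_lt_card ((Finset.ssubset_iff_of_subset hsub).mpr ⟨C, hCin, hCnot⟩)
        omega
      choose T hTne hTIS hTle hTeq using fun D (hD : D ∈ S) =>
        ih D (hS hD).1 (hDcard D hD)
      refine ⟨⋃ D, ⋃ (hD : D ∈ S), T D hD, ?_, ?_, ?_, ?_⟩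
      · obtain ⟨D, hD⟩ := hSne
        obtain ⟨E, hE⟩ := hTne D hD
        exact ⟨E, Set.mem_iUnion.mpr ⟨D, Set.mem_iUnion.mpr ⟨hD, hE⟩⟩⟩
      · intro E hE
        obtain ⟨D, hE⟩ := Set.mem_iUnion.mp hE
        obtain ⟨hD, hE⟩ := Set.mem_iUnion.mp hE
        exact hTIS D hD hE
      · intro E hE
        obtain ⟨D, hE⟩ := Set.mem_iUnion.mp hE
        obtain ⟨hD, hE⟩ := Set.mem_iUnion.mp hE
        exact (hCle D hD).trans (hTle D hD E hE)
      · apply le_antisymm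
        · apply le_iInf₂
          intro E hE
          obtain ⟨D, hE⟩ := Set.mem_iUnion.mp hE
          obtain ⟨hD, hE⟩ := Set.mem_iUnion.mp hE
          exact (hCle D hD).trans (hTle D hD E hE)
        · rw [hCeq]
          apply le_iInf₂
          intro D hD
          rw [hTeq D hD]
          apply le_iInf₂
          intro E hE
          exact biInf_le _ (Set.mem_iUnion.mpr ⟨D, Set.mem_iUnion.mpr ⟨hD, hE⟩⟩)
    · refine ⟨{C}, ⟨C, rfl⟩, ?_, ?_, by simp⟩
      · intro D hD
        rw [Set.mem_singleton_iff] at hD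
        subst hD
        exact ⟨hC, hI⟩
      · intro D hD
        rw [Set.mem_singleton_iff] at hD
        subst hD
        exact le_rfl

lemma nbhd_IS_eq {U : Type*} (𝒞 : Set (U → unitInterval)) (hf : 𝒞.Finite) (x : U) :
    nbhd 𝒞 x = nbhd (IS 𝒞) x := by
  apply le_antisymm
  · apply le_iInf₂
    intro D hD
    exact biInf_le _ ⟨hD.1.1, hD.2⟩
  · apply le_iInf₂
    intro C hC
    obtain ⟨S, hSne, hSIS, hSle, hCeq⟩ := key_IS 𝒞 hf C hC.1
    calc nbhd (IS 𝒞) x ≤ ⨅ D ∈ S, D := by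
          apply le_iInf₂
          intro D hD
          exact biInf_le _ ⟨hSIS hD, lt_of_lt_of_le hC.2 (hSle D hD x)⟩
      _ = C := hCeq.symm

/-- The covering `𝒞` and its set of non-intersectional elements `IS 𝒞` generate the same
union of neighborhoods over the support of any fuzzy set, and the lower approximation
with respect to `IS 𝒞` is contained in the one with respect to `𝒞`. -/
theorem nbhd_IS_and_lowerApprox_IS {U : Type*} [Fintype U] [Nonempty U]
    (𝒞 : Set (U → unitInterval)) (h𝒞 : IsFuzzyCovering 𝒞) :
    ∀ X : U → unitInterval,
      (⨆ x ∈ {x | 0 < X x}, nbhd 𝒞 x) = (⨆ x ∈ {x | 0 < X x}, nbhd (IS 𝒞) x) ∧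
      lowerApprox (IS 𝒞) X ≤ lowerApprox 𝒞 X := by
  intro X
  constructor
  · apply iSup_congr
    intro x
    apply iSup_congr
    intro _
    exact nbhd_IS_eq 𝒞 h𝒞.1 x
  · apply iSup₂_le
    intro C hC
    exact le_biSup (fun C => C) (Set.mem_sep hC.1.1 hC.2)

end
end

section
/- Let U1 and U2 be finite nonempty sets, f : U1 → U2 a map, and 𝒞1, 𝒞2 fuzzy coverings of U1. If f is consistent with respect to 𝒞1 and with respect to 𝒞2, then f is consistent with respect to the intersection covering 𝒞1 ⊓ 𝒞2. -/
noncomputable section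

/-- The intersection covering `𝒞₁ ⊓ 𝒞₂ = {C_{1x} ∩ C_{2x} : x ∈ U}`. -/
def interCov {U : Type*} (𝒞₁ 𝒞₂ : Set (U → unitInterval)) : Set (U → unitInterval) :=
  {D | ∃ x : U, D = nbhd 𝒞₁ x ⊓ nbhd 𝒞₂ x}

/-- `f` is consistent with respect to `𝒞` if points with the same image have the same
membership degree in every member of `𝒞`. -/
def Consistent {U₁ U₂ : Type*} (f : U₁ → U₂) (𝒞 : Set (U₁ → unitInterval)) : Prop :=
  ∀ y z : U₁, f y = f z → ∀ C ∈ 𝒞, C y = C z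

/-- The image of a fuzzy set under `f` (Zadeh's extension principle):
`f(C)(y) = sup {C(x) : f(x) = y}` (and `0`, i.e. `⊥`, when the preimage is empty). -/
def fimg {U₁ U₂ : Type*} (f : U₁ → U₂) (C : U₁ → unitInterval) : U₂ → unitInterval :=
  fun y => ⨆ x ∈ {x | f x = y}, C x

/-- The preimage of a fuzzy set under `f`: `f⁻¹(T)(x) = T(f(x))`. -/
def fpre {U₁ U₂ : Type*} (f : U₁ → U₂) (T : U₂ → unitInterval) : U₁ → unitInterval :=
  fun x => T (f x)

/-- A map consistent with respect to two fuzzy coverings is consistent with respect to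
their intersection covering. -/
theorem consistent_interCov {U₁ U₂ : Type*} [Fintype U₁] [Nonempty U₁] [Fintype U₂] [Nonempty U₂]
    (f : U₁ → U₂) (𝒞₁ 𝒞₂ : Set (U₁ → unitInterval))
    (h₁ : IsFuzzyCovering 𝒞₁) (h₂ : IsFuzzyCovering 𝒞₂)
    (hc₁ : Consistent f 𝒞₁) (hc₂ : Consistent f 𝒞₂) :
    Consistent f (interCov 𝒞₁ 𝒞₂) := by
  have key : ∀ (𝒞 : Set (U₁ → unitInterval)), Consistent f 𝒞 →
      ∀ x y z : U₁, f y = f z → nbhd 𝒞 x y = nbhd 𝒞 x z := by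
    intro 𝒞 hc x y z hyz
    simp only [nbhd, iInf_apply]
    exact iInf_congr fun C => iInf_congr fun hC => hc y z hyz C hC.1
  rintro y z hyz D ⟨x, rfl⟩
  show (nbhd 𝒞₁ x ⊓ nbhd 𝒞₂ x) y = (nbhd 𝒞₁ x ⊓ nbhd 𝒞₂ x) z
  simp only [Pi.inf_apply, key 𝒞₁ hc₁ x y z hyz, key 𝒞₂ hc₂ x y z hyz]

end
end

section
/- Let U1 and U2 be finite nonempty sets, f : U1 → U2 a surjection, and 𝒞 a fuzzy covering of U1. If f is consistent with respect to 𝒞, then f⁻¹(f(𝒞)) = 𝒞, where f(𝒞) = {f(C) : C ∈ 𝒞} and f⁻¹(𝒟) = {f⁻¹(T) : T ∈ 𝒟}. -/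
noncomputable section

/-- For a consistent surjection, `f⁻¹(f(𝒞)) = 𝒞`. -/
theorem fpre_image_fimg_image {U₁ U₂ : Type*} [Fintype U₁] [Nonempty U₁] [Fintype U₂] [Nonempty U₂]
    (f : U₁ → U₂) (hf : Function.Surjective f)
    (𝒞 : Set (U₁ → unitInterval)) (h𝒞 : IsFuzzyCovering 𝒞)
    (hc : Consistent f 𝒞) :
    fpre f '' (fimg f '' 𝒞) = 𝒞 := by
  have key : ∀ C ∈ 𝒞, fpre f (fimg f C) = C := by
    intro C hC
    funext x
    simp only [fpre, fimg]
    apply le_antisymm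
    · exact iSup₂_le fun x' hx' => (hc x' x hx' C hC).le
    · exact le_iSup₂_of_le x rfl le_rfl
  rw [Set.image_image]
  ext C
  constructor
  · rintro ⟨D, hD, rfl⟩; show fpre f (fimg f D) ∈ 𝒞; rw [key D hD]; exact hD
  · intro hC; exact ⟨C, hC, key C hC⟩

end
end

section
/- Let U1 and U2 be finite nonempty sets, f : U1 → U2 a surjection, and 𝒞1, 𝒞2 fuzzy coverings of U1. If f is consistent with respect to 𝒞1 and with respect to 𝒞2, then f(𝒞1 ⊓ 𝒞2) = f(𝒞1) ⊓ f(𝒞2), where f(𝒞) = {f(C) : C ∈ 𝒞}, the left-hand ⊓ is the intersection covering in U1, and the right-hand ⊓ is the intersection covering of the fuzzy coverings f(𝒞1) and f(𝒞2) of U2. -/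
noncomputable section

lemma fimg_apply_of_const' {U₁ U₂ : Type*} (f : U₁ → U₂) (C : U₁ → unitInterval)
    (hC : ∀ y z, f y = f z → C y = C z) (w : U₁) : fimg f C (f w) = C w := by
  apply le_antisymm
  · exact iSup₂_le fun x hx => (hC x w hx).le
  · exact le_iSup₂ (f := fun x (_ : f x = f w) => C x) w rfl

lemma nbhd_apply' {U : Type*} (𝒞 : Set (U → unitInterval)) (x w : U) :
    nbhd 𝒞 x w = ⨅ C ∈ {C ∈ 𝒞 | 0 < C x}, C w := by
  simp [nbhd, iInf_apply]

lemma nbhd_const' {U₁ U₂ : Type*} (f : U₁ → U₂) (𝒞 : Set (U₁ → unitInterval))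
    (hc : Consistent f 𝒞) (x : U₁) :
    ∀ y z, f y = f z → nbhd 𝒞 x y = nbhd 𝒞 x z := by
  intro y z hyz
  rw [nbhd_apply', nbhd_apply']
  exact iInf_congr fun C => iInf_congr fun hC => hc y z hyz C hC.1

lemma fimg_nbhd' {U₁ U₂ : Type*} (f : U₁ → U₂) (hf : Function.Surjective f)
    (𝒞 : Set (U₁ → unitInterval)) (hc : Consistent f 𝒞) (x : U₁) :
    fimg f (nbhd 𝒞 x) = nbhd (fimg f '' 𝒞) (f x) := by
  funext y
  obtain ⟨w, rfl⟩ := hf y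
  rw [fimg_apply_of_const' f _ (nbhd_const' f 𝒞 hc x), nbhd_apply', nbhd_apply']
  have hset : {T ∈ fimg f '' 𝒞 | 0 < T (f x)} = fimg f '' {C ∈ 𝒞 | 0 < C x} := by
    ext T
    constructor
    · rintro ⟨⟨C, hC, rfl⟩, hpos⟩
      exact ⟨C, ⟨hC, by rwa [fimg_apply_of_const' f C (fun y z h => hc y z h C hC)] at hpos⟩, rfl⟩
    · rintro ⟨C, ⟨hC, hpos⟩, rfl⟩
      exact ⟨⟨C, hC, rfl⟩, by rwa [fimg_apply_of_const' f C (fun y z h => hc y z h C hC)]⟩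
  rw [hset, iInf_image]
  exact iInf_congr fun C => iInf_congr fun hC =>
    (fimg_apply_of_const' f C (fun y z h => hc y z h C hC.1) w).symm

lemma fimg_inf' {U₁ U₂ : Type*} (f : U₁ → U₂) (hf : Function.Surjective f)
    (A B : U₁ → unitInterval) (hA : ∀ y z, f y = f z → A y = A z)
    (hB : ∀ y z, f y = f z → B y = B z) :
    fimg f (A ⊓ B) = fimg f A ⊓ fimg f B := by
  funext y
  obtain ⟨w, rfl⟩ := hf y
  have hAB : ∀ y z, f y = f z → (A ⊓ B) y = (A ⊓ B) z := fun y z h => by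
    simp only [Pi.inf_apply, hA y z h, hB y z h]
  rw [fimg_apply_of_const' f _ hAB, Pi.inf_apply, Pi.inf_apply,
    fimg_apply_of_const' f A hA, fimg_apply_of_const' f B hB]

/-- For a surjection consistent with respect to both coverings, the image of the intersection
covering is the intersection covering of the images. -/
theorem fimg_interCov {U₁ U₂ : Type*} [Fintype U₁] [Nonempty U₁] [Fintype U₂] [Nonempty U₂]
    (f : U₁ → U₂) (hf : Function.Surjective f)
    (𝒞₁ 𝒞₂ : Set (U₁ → unitInterval))
    (h₁ : IsFuzzyCovering 𝒞₁) (h₂ : IsFuzzyCovering 𝒞₂)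
    (hc₁ : Consistent f 𝒞₁) (hc₂ : Consistent f 𝒞₂) :
    fimg f '' interCov 𝒞₁ 𝒞₂ = interCov (fimg f '' 𝒞₁) (fimg f '' 𝒞₂) := by
  ext D
  constructor
  · rintro ⟨E, ⟨x, rfl⟩, rfl⟩
    refine ⟨f x, ?_⟩
    rw [fimg_inf' f hf _ _ (nbhd_const' f 𝒞₁ hc₁ x) (nbhd_const' f 𝒞₂ hc₂ x),
      fimg_nbhd' f hf 𝒞₁ hc₁ x, fimg_nbhd' f hf 𝒞₂ hc₂ x]
  · rintro ⟨z, rfl⟩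
    obtain ⟨x, rfl⟩ := hf z
    refine ⟨nbhd 𝒞₁ x ⊓ nbhd 𝒞₂ x, ⟨x, rfl⟩, ?_⟩
    rw [fimg_inf' f hf _ _ (nbhd_const' f 𝒞₁ hc₁ x) (nbhd_const' f 𝒞₂ hc₂ x),
      fimg_nbhd' f hf 𝒞₁ hc₁ x, fimg_nbhd' f hf 𝒞₂ hc₂ x]

end
end
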